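/- If a signed graph Γ = (G, σ) has at least one edge, then μ₁(Γ) ≥ d₁(Γ) + 1, where μ₁(Γ) is the largest Laplacian eigenvalue and d₁(Γ) is the maximum vertex degree of the underlying graph. -/

import Mathlib

/-!
Let `u` be a vertex of maximum degree `d` and take the test vector `x` with `x u = d`,
`x w = -σ(u, w)` on the neighbours of `u` and `0` elsewhere. The quadratic form of the signed
Laplacian is the sum of `(x i - σ(i, j) x j)²` over edges, and the `d` edges at `u` alone
contribute `d (d + 1)²`, while `‖x‖² = d (d + 1)`. So the Rayleigh quotient of `x` is at least
`d + 1`, hence so is the largest eigenvalue.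
-/

open Matrix Polynomial

open scoped MatrixOrder in
theorem Matrix.IsHermitian.exists_eigenvalue_ge_of_le_dotProduct_mulVec {m : Type*} [Fintype m]
    [DecidableEq m] {A : Matrix m m ℝ} (hA : A.IsHermitian) {x : m → ℝ} (hx : x ≠ 0) {r : ℝ}
    (h : r * (x ⬝ᵥ x) ≤ x ⬝ᵥ (A *ᵥ x)) : ∃ i, r ≤ hA.eigenvalues i := by
  obtain ⟨k, -⟩ := Function.ne_iff.1 hx
  obtain ⟨i, hi⟩ := (have : Nonempty m := ⟨k⟩; Finite.exists_max hA.eigenvalues)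
  refine ⟨i, ?_⟩
  have hle : A ≤ algebraMap ℝ _ (hA.eigenvalues i) := by
    refine le_algebraMap_of_spectrum_le (fun t ht => ?_) hA.isSelfAdjoint
    obtain ⟨j, rfl⟩ := hA.spectrum_real_eq_range_eigenvalues ▸ ht
    exact hi j
  have hform : x ⬝ᵥ (A *ᵥ x) ≤ hA.eigenvalues i * (x ⬝ᵥ x) := by
    simpa [sub_mulVec, dotProduct_sub, Algebra.algebraMap_eq_smul_one, smul_mulVec]
      using (Matrix.le_iff.1 hle).dotProduct_mulVec_nonneg x
  have hxx : 0 < x ⬝ᵥ x := by simpa using dotProduct_star_self_pos_iff.2 hx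
  exact le_of_mul_le_mul_right (h.trans hform) hxx

theorem Matrix.IsHermitian.exists_root_eq_eigenvalue {m : Type*} [Fintype m] [DecidableEq m]
    {A : Matrix m m ℝ} (hA : A.IsHermitian) {μ : m → ℝ} (hμ : A.charpoly = ∏ j, (X - C (μ j)))
    (i : m) : ∃ j, μ j = hA.eigenvalues i := by
  have hroot : (∏ j, (X - C (μ j))).eval (hA.eigenvalues i) = 0 := by
    rw [← hμ, hA.charpoly_eq, eval_prod]
    exact Finset.prod_eq_zero (Finset.mem_univ i) (by simp)
  simp only [eval_prod, eval_sub, eval_X, eval_C] at hroot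
  obtain ⟨j, -, hj⟩ := Finset.prod_eq_zero_iff.1 hroot
  exact ⟨j, (sub_eq_zero.1 hj).symm⟩

namespace SimpleGraph

open Finset

variable {V : Type*} [Fintype V] (G : SimpleGraph V) [DecidableRel G.Adj]

def signedAdjMatrix (σ : V → V → ℝ) : Matrix V V ℝ := of fun i j => if G.Adj i j then σ i j else 0

variable {G} {σ : V → V → ℝ}

theorem signedAdjMatrix_mulVec_apply (x : V → ℝ) (i : V) :
    (G.signedAdjMatrix σ *ᵥ x) i = ∑ j ∈ G.neighborFinset i, σ i j * x j := by
  simp [signedAdjMatrix, mulVec, dotProduct, ite_mul, ← sum_filter, neighborFinset_eq_filter]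

theorem sum_sum_neighborFinset_comm (f : V → V → ℝ) :
    ∑ i, ∑ j ∈ G.neighborFinset i, f i j = ∑ j, ∑ i ∈ G.neighborFinset j, f i j :=
  Finset.sum_comm' fun i j => by simp [G.adj_comm]

variable [DecidableEq V]

theorem two_mul_sum_neighborFinset_le_sum_sum {f : V → V → ℝ}
    (hf : ∀ i j, G.Adj i j → 0 ≤ f i j) (hfsymm : ∀ i j, G.Adj i j → f i j = f j i) (u : V) :
    2 * ∑ j ∈ G.neighborFinset u, f u j ≤ ∑ i, ∑ j ∈ G.neighborFinset i, f i j := by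
  have hrow_nonneg : ∀ i, 0 ≤ ∑ j ∈ G.neighborFinset i, f i j := fun i =>
    sum_nonneg fun j hj => hf i j ((G.mem_neighborFinset i j).1 hj)
  calc 2 * ∑ j ∈ G.neighborFinset u, f u j
      = ∑ j ∈ G.neighborFinset u, f u j + ∑ i ∈ G.neighborFinset u, f i u := by
        rw [two_mul, sum_congr rfl fun i hi => hfsymm u i ((G.mem_neighborFinset u i).1 hi)]
    _ ≤ ∑ j ∈ G.neighborFinset u, f u j +
          ∑ i ∈ G.neighborFinset u, ∑ j ∈ G.neighborFinset i, f i j := by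
        gcongr with i hi
        exact single_le_sum (fun j hj => hf i j ((G.mem_neighborFinset i j).1 hj))
          ((G.mem_neighborFinset i u).2 ((G.mem_neighborFinset u i).1 hi).symm)
    _ = ∑ i ∈ insert u (G.neighborFinset u), ∑ j ∈ G.neighborFinset i, f i j := by
        rw [sum_insert (G.notMem_neighborFinset_self u)]
    _ ≤ ∑ i, ∑ j ∈ G.neighborFinset i, f i j :=
        sum_le_univ_sum_of_nonneg hrow_nonneg

variable (G σ) in
def signedLapMatrix : Matrix V V ℝ := G.degMatrix ℝ - G.signedAdjMatrix σ

theorem isHermitian_signedLapMatrix (hsym : ∀ i j, σ i j = σ j i) :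
    (G.signedLapMatrix σ).IsHermitian := by
  refine (G.isHermitian_degMatrix ℝ).sub ?_
  ext i j
  simp [signedAdjMatrix, G.adj_comm, hsym]

theorem two_mul_dotProduct_signedLapMatrix_mulVec (hσ : ∀ i j, G.Adj i j → σ i j ^ 2 = 1)
    (x : V → ℝ) :
    2 * (x ⬝ᵥ (G.signedLapMatrix σ *ᵥ x)) =
      ∑ i, ∑ j ∈ G.neighborFinset i, (x i - σ i j * x j) ^ 2 := by
  have hdeg_left : ∑ i, G.degree i * x i * x i = ∑ i, ∑ j ∈ G.neighborFinset i, x i ^ 2 := by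
    simp [sum_const, card_neighborFinset_eq_degree, sq, mul_assoc]
  have hdeg_right : ∑ i, G.degree i * x i * x i = ∑ i, ∑ j ∈ G.neighborFinset i, x j ^ 2 := by
    rw [hdeg_left, sum_sum_neighborFinset_comm]
  have hexpand : ∀ i, ∀ j ∈ G.neighborFinset i, (x i - σ i j * x j) ^ 2 =
      x i ^ 2 + x j ^ 2 - 2 * (x i * (σ i j * x j)) := by
    intro i j hj
    linear_combination x j ^ 2 * hσ i j ((G.mem_neighborFinset i j).1 hj)
  rw [sum_congr rfl fun i _ => sum_congr rfl (hexpand i)]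
  simp only [signedLapMatrix, sub_mulVec, dotProduct_sub, dotProduct_mulVec_degMatrix]
  simp only [dotProduct, signedAdjMatrix_mulVec_apply, mul_sum, sum_sub_distrib, sum_add_distrib,
    ← hdeg_left, ← hdeg_right]
  simp only [← mul_sum]
  ring

theorem sum_neighborFinset_sq_le_dotProduct_signedLapMatrix_mulVec
    (hsym : ∀ i j, σ i j = σ j i) (hσ : ∀ i j, G.Adj i j → σ i j ^ 2 = 1) (x : V → ℝ) (u : V) :
    ∑ j ∈ G.neighborFinset u, (x u - σ u j * x j) ^ 2 ≤ x ⬝ᵥ (G.signedLapMatrix σ *ᵥ x) := by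
  have hsymm : ∀ i j, G.Adj i j → (x i - σ i j * x j) ^ 2 = (x j - σ j i * x i) ^ 2 := by
    intro i j hij
    rw [← hsym i j]
    linear_combination (x j ^ 2 - x i ^ 2) * hσ i j hij
  have := two_mul_sum_neighborFinset_le_sum_sum (fun i j _ => sq_nonneg (x i - σ i j * x j))
    hsymm u
  rw [← two_mul_dotProduct_signedLapMatrix_mulVec hσ] at this
  linarith

theorem exists_degree_add_one_mul_dotProduct_le (hsym : ∀ i j, σ i j = σ j i)
    (hσ : ∀ i j, G.Adj i j → σ i j ^ 2 = 1) {u : V} (hu : 0 < G.degree u) :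
    ∃ x : V → ℝ, x ≠ 0 ∧
      (G.degree u + 1) * (x ⬝ᵥ x) ≤ x ⬝ᵥ (G.signedLapMatrix σ *ᵥ x) := by
  set d : ℝ := (G.degree u : ℝ) with hd
  set x : V → ℝ := fun w => if w = u then d else if G.Adj u w then -σ u w else 0 with hx
  have hxu : x u = d := if_pos rfl
  have hx_adj : ∀ w, G.Adj u w → x w = -σ u w := fun w hw => by
    simp [hx, hw, hw.ne']
  have hsq : ∀ w, x w ^ 2 = (if w = u then d ^ 2 else 0) + (if G.Adj u w then 1 else 0) := by
    intro w
    by_cases hwu : w = u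
    · simp [hwu, hxu]
    · by_cases huw : G.Adj u w
      · simp [hwu, huw, hx_adj w huw, hσ u w huw]
      · simp [hx, hwu, huw]
  have hnorm : x ⬝ᵥ x = d * (d + 1) := by
    simp only [dotProduct, ← sq, hsq, sum_add_distrib, sum_ite_eq', mem_univ, if_true,
      ← degree_eq_sum_if_adj, ← hd]
    ring
  have hrow : ∑ j ∈ G.neighborFinset u, (x u - σ u j * x j) ^ 2 = d * (d + 1) ^ 2 := by
    rw [sum_congr rfl fun j hj => ?_, sum_const, card_neighborFinset_eq_degree, nsmul_eq_mul]
    have hj := (G.mem_neighborFinset u j).1 hj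
    rw [hxu, hx_adj j hj]
    linear_combination (2 * d + σ u j ^ 2 + 1) * hσ u j hj
  refine ⟨x, fun h => ?_, ?_⟩
  · have hd_pos : (0 : ℝ) < d := Nat.cast_pos.2 hu
    exact hd_pos.ne' (hxu ▸ congrFun h u)
  · calc (d + 1) * (x ⬝ᵥ x) = ∑ j ∈ G.neighborFinset u, (x u - σ u j * x j) ^ 2 := by
          rw [hnorm, hrow]; ring
      _ ≤ x ⬝ᵥ (G.signedLapMatrix σ *ᵥ x) :=
          sum_neighborFinset_sq_le_dotProduct_signedLapMatrix_mulVec hsym hσ x u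

end SimpleGraph

/-- If a signed graph has at least one edge, then its largest Laplacian
eigenvalue is at least the maximum degree plus one. -/
theorem stmt_16 {n : ℕ} (hn : 0 < n) (G : SimpleGraph (Fin n)) [DecidableRel G.Adj]
    (σ : Fin n → Fin n → ℝ)
    (hσ : ∀ i j, G.Adj i j → σ i j = 1 ∨ σ i j = -1)
    (hsym : ∀ i j, σ i j = σ j i)
    (hedge : ∃ u v, G.Adj u v)
    (L : Matrix (Fin n) (Fin n) ℝ)
    (hL : L = fun i j => (if i = j then (G.degree i : ℝ) else 0) -
      (if G.Adj i j then σ i j else 0))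
    (μ : Fin n → ℝ) (hmono : Antitone μ)
    (hchar : L.charpoly = ∏ i, (X - C (μ i))) :
    (G.maxDegree : ℝ) + 1 ≤ μ ⟨0, hn⟩ := by
  have hσ_sq : ∀ i j, G.Adj i j → σ i j ^ 2 = 1 := fun i j h => by
    rcases hσ i j h with h | h <;> simp [h]
  have hL : L = G.signedLapMatrix σ := hL
  subst hL
  have : Nonempty (Fin n) := ⟨⟨0, hn⟩⟩
  obtain ⟨u, hu⟩ := G.exists_maximal_degree_vertex
  obtain ⟨a, b, hab⟩ := hedge
  have hdeg_pos : 0 < G.degree u :=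
    hu ▸ ((G.degree_pos_iff_exists_adj a).2 ⟨b, hab⟩).trans_le (G.degree_le_maxDegree a)
  have hA := SimpleGraph.isHermitian_signedLapMatrix (G := G) hsym
  obtain ⟨x, hx0, hx⟩ :=
    SimpleGraph.exists_degree_add_one_mul_dotProduct_le hsym hσ_sq hdeg_pos
  obtain ⟨i, hi⟩ := hA.exists_eigenvalue_ge_of_le_dotProduct_mulVec hx0 hx
  obtain ⟨j, hj⟩ := hA.exists_root_eq_eigenvalue hchar i
  calc (G.maxDegree : ℝ) + 1 = G.degree u + 1 := by rw [hu]
    _ ≤ μ j := hj ▸ hi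
    _ ≤ μ ⟨0, hn⟩ := hmono (Nat.zero_le _)
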